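/- Let T be a real n×n matrix with nonnegative entries (T ≥ 0 entrywise) and spectral radius ρ = ρ(T) < 1, suppose the spectrum of A = I - T consists of positive real numbers, and let β be a real number with -1 < β < (1-ρ)/(1+ρ). Then the spectral radius of the entrywise absolute value |T_{1,β}| of the 2n×2n block matrix T_{1,β} = [[(1+β)T, -βI], [I, 0]] is strictly less than 1. -/

import Mathlib

/-!
Entrywise, `|T_{1,β}| = [[(1+β)T, |β|I], [I, 0]]`. If `(x, y)` is an eigenvector of this matrix
for `z ≠ 0`, then `x = z y` and `(1+β) T x + |β| y = z x`, so `x` is an eigenvector of `T` for some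
`μ` with `z² = (1+β) μ z + |β|`. Since `|μ| ≤ ρ`, assuming `|z| ≥ 1` gives
`|z|² ≤ ((1+β)ρ + |β|)|z|`, and the bound on `β` is exactly `(1+β)ρ + |β| < 1`.
-/

open Matrix

/-- The spectral radius of a complex square matrix: the supremum of the moduli
of its (complex) eigenvalues. -/
noncomputable def specRad {m : Type*} [Fintype m] [DecidableEq m]
    (M : Matrix m m ℂ) : ℝ :=
  sSup ((fun z : ℂ => ‖z‖) '' spectrum ℂ M)

/-- The spectral radius of a real square matrix: the supremum of the moduli
of its complex eigenvalues. -/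
noncomputable def specRadR {m : Type*} [Fintype m] [DecidableEq m]
    (M : Matrix m m ℝ) : ℝ :=
  specRad (M.map Complex.ofReal)

section Spectrum

variable {K m : Type*} [Field K] [Fintype m] [DecidableEq m]

theorem Matrix.mem_spectrum_iff_exists_mulVec_eq_smul {M : Matrix m m K} {μ : K} :
    μ ∈ spectrum K M ↔ ∃ v, v ≠ 0 ∧ M *ᵥ v = μ • v := by
  rw [← spectrum_toLin', ← Module.End.hasEigenvalue_iff_mem_spectrum]
  constructor
  · intro h
    obtain ⟨v, hv, hv0⟩ := h.exists_hasEigenvector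
    exact ⟨v, hv0, by simpa using Module.End.mem_eigenspace_iff.mp hv⟩
  · rintro ⟨v, hv0, hv⟩
    exact Module.End.hasEigenvalue_of_hasEigenvector
      ⟨Module.End.mem_eigenspace_iff.mpr (by simpa using hv), hv0⟩

theorem Matrix.exists_mem_spectrum_of_mem_spectrum_fromBlocks {B : Matrix m m K} {a b z : K}
    (ha : a ≠ 0) (hz : z ≠ 0)
    (h : z ∈ spectrum K (fromBlocks (a • B) (b • (1 : Matrix m m K)) (1 : Matrix m m K) 0)) :
    ∃ μ ∈ spectrum K B, z ^ 2 = a * μ * z + b := by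
  obtain ⟨v, hv0, hv⟩ := mem_spectrum_iff_exists_mulVec_eq_smul.mp h
  have htop i : a * (B *ᵥ (v ∘ Sum.inl)) i + b * v (Sum.inr i) = z * v (Sum.inl i) := by
    simpa [fromBlocks_mulVec, smul_mulVec] using congrFun hv (Sum.inl i)
  have hbot i : v (Sum.inl i) = z * v (Sum.inr i) := by
    simpa [fromBlocks_mulVec] using congrFun hv (Sum.inr i)
  have hx0 : v ∘ Sum.inl ≠ 0 := by
    intro hx
    apply hv0
    ext (i | i)
    · exact congrFun hx i
    · simpa [hz, show v (Sum.inl i) = 0 from congrFun hx i] using (hbot i).symm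
  refine ⟨(z ^ 2 - b) / (a * z),
    mem_spectrum_iff_exists_mulVec_eq_smul.mpr ⟨v ∘ Sum.inl, hx0, ?_⟩, ?_⟩
  · ext i
    simp only [Pi.smul_apply, smul_eq_mul, Function.comp_apply]
    field_simp
    linear_combination z * htop i + b * hbot i
  · field_simp
    ring

end Spectrum

section SpectralRadius

variable {m : Type*} [Fintype m] [DecidableEq m]

theorem norm_le_specRad (M : Matrix m m ℂ) {μ : ℂ} (h : μ ∈ spectrum ℂ M) : ‖μ‖ ≤ specRad M :=
  le_csSup ((M.finite_spectrum.image _).bddAbove) ⟨μ, h, rfl⟩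

theorem specRad_nonneg (M : Matrix m m ℂ) : 0 ≤ specRad M :=
  Real.sSup_nonneg <| by
    rintro _ ⟨z, _, rfl⟩
    exact norm_nonneg z

theorem specRad_lt_of_forall_norm_lt {M : Matrix m m ℂ} {c : ℝ} (hc : 0 < c)
    (h : ∀ μ ∈ spectrum ℂ M, ‖μ‖ < c) : specRad M < c := by
  rcases ((fun z : ℂ => ‖z‖) '' spectrum ℂ M).eq_empty_or_nonempty with he | hne
  · rwa [specRad, he, Real.sSup_empty]
  · obtain ⟨μ, hμ, hμmax⟩ := hne.csSup_mem (M.finite_spectrum.image _)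
    rw [specRad, ← hμmax]
    exact h μ hμ

end SpectralRadius

theorem norm_lt_one_of_sq_eq {𝕜 : Type*} [NormedDivisionRing 𝕜] {z μ a b : 𝕜} {ρ : ℝ}
    (hμ : ‖μ‖ ≤ ρ) (hab : ‖a‖ * ρ + ‖b‖ < 1) (h : z ^ 2 = a * μ * z + b) : ‖z‖ < 1 := by
  by_contra! hz
  have hsq : ‖z‖ ^ 2 ≤ ‖a‖ * ‖μ‖ * ‖z‖ + ‖b‖ := by
    simpa only [← h, norm_pow, norm_mul] using norm_add_le (a * μ * z) b
  nlinarith [norm_nonneg a, norm_nonneg b, mul_le_mul_of_nonneg_left hμ (norm_nonneg a)]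

theorem one_add_mul_add_abs_lt_one {β ρ : ℝ} (hρ0 : 0 ≤ ρ) (hρ1 : ρ < 1) (hβneg : -1 < β)
    (hβ : β < (1 - ρ) / (1 + ρ)) : (1 + β) * ρ + |β| < 1 := by
  rw [lt_div_iff₀ (by linarith)] at hβ
  rcases abs_cases β with ⟨h, _⟩ | ⟨h, _⟩ <;> nlinarith

theorem map_abs_fromBlocks_of_nonneg {n : Type*} [DecidableEq n] {T : Matrix n n ℝ}
    (hT : ∀ i j, 0 ≤ T i j) {β : ℝ} (hβ : -1 < β) :
    (fromBlocks ((1 + β) • T) (-β • (1 : Matrix n n ℝ)) 1 0).map abs =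
      fromBlocks ((1 + β) • T) (|β| • 1) (1 : Matrix n n ℝ) 0 := by
  rw [fromBlocks_map, Matrix.map_one abs abs_zero abs_one, Matrix.map_zero abs abs_zero]
  congr 1
  · ext i j
    simp [abs_mul, abs_of_nonneg (hT i j), abs_of_pos (show 0 < 1 + β by linarith)]
  · ext i j
    simp [one_apply, apply_ite abs]

theorem asynchronous_second_order_richardson_alpha_one_general
    {n : ℕ} (T : Matrix (Fin n) (Fin n) ℝ)
    (hT : ∀ i j, 0 ≤ T i j)
    (ρ : ℝ) (hρ : ρ = specRadR T) (hρ1 : ρ < 1)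
    (β : ℝ) (hβneg : -1 < β) (hβ : β < (1 - ρ) / (1 + ρ)) :
    specRadR (Matrix.of fun i j =>
      |(Matrix.fromBlocks
          ((1 + β) • T)
          (-β • (1 : Matrix (Fin n) (Fin n) ℝ))
          (1 : Matrix (Fin n) (Fin n) ℝ)
          (0 : Matrix (Fin n) (Fin n) ℝ)) i j|) < 1 := by
  have h1β : 0 < 1 + β := by linarith
  have hρ0 : 0 ≤ ρ := hρ ▸ specRad_nonneg _
  change specRad ((fromBlocks _ _ _ _).map abs |>.map _) < 1
  rw [map_abs_fromBlocks_of_nonneg hT hβneg, fromBlocks_map, map_smul' _ _ _ Complex.ofReal_mul,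
    map_smul' _ _ _ Complex.ofReal_mul, Matrix.map_one _ Complex.ofReal_zero Complex.ofReal_one,
    Matrix.map_zero _ Complex.ofReal_zero]
  refine specRad_lt_of_forall_norm_lt one_pos fun z hz => ?_
  rcases eq_or_ne z 0 with rfl | hz0
  · simp
  obtain ⟨μ, hμ, hsq⟩ :=
    exists_mem_spectrum_of_mem_spectrum_fromBlocks (by exact_mod_cast h1β.ne') hz0 hz
  refine norm_lt_one_of_sq_eq ((norm_le_specRad _ hμ).trans_eq hρ.symm) ?_ hsq
  rw [Complex.norm_real, Complex.norm_real, Real.norm_of_nonneg h1β.le, Real.norm_eq_abs, abs_abs]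
  exact one_add_mul_add_abs_lt_one hρ0 hρ1 hβneg hβ

theorem asynchronous_second_order_richardson_alpha_one
    {n : ℕ} (T : Matrix (Fin n) (Fin n) ℝ)
    (hT : ∀ i j, 0 ≤ T i j)
    (ρ : ℝ) (hρ : ρ = specRadR T) (hρ1 : ρ < 1)
    (hspec : ∀ μ ∈ spectrum ℂ
        (((1 : Matrix (Fin n) (Fin n) ℝ) - T).map Complex.ofReal),
      ∃ r : ℝ, 0 < r ∧ μ = (r : ℂ))
    (β : ℝ) (hβneg : -1 < β) (hβ : β < (1 - ρ) / (1 + ρ)) :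
    specRadR (Matrix.of fun i j =>
      |(Matrix.fromBlocks
          ((1 + β) • T)
          (-β • (1 : Matrix (Fin n) (Fin n) ℝ))
          (1 : Matrix (Fin n) (Fin n) ℝ)
          (0 : Matrix (Fin n) (Fin n) ℝ)) i j|) < 1 :=
  asynchronous_second_order_richardson_alpha_one_general T hT ρ hρ hρ1 β hβneg hβ
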